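/- arXiv:1011.5442 — 2 statements merged into one kernel-verified Lean document; each statement's English description precedes it below -/
import Mathlib

section
/- The double integral ∫₀^{2π} ∫₀^π (1/(16π)) · sin α · (sin(α/2))^{-3} · log((cos²β + sin²β · cos²α)^{1/2}) dα dβ equals √2 − 1 − log(1 + √2). -/
/-!
For fixed `α`, put `c = |cos α|` and `t = (c - 1) / (c + 1)`. Then
`cos² β + c² sin² β = ((1 + c) / 2)² |e^{2iβ} - t|²`, and since the mean of `log |z - t|`
over the unit circle vanishes for `|t| < 1`, the `β`-integral equals `4π log ((1 + c) / 2)`.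
The integrand has constant sign, so Fubini applies, and what is left is an elementary
`α`-integral: with `s = sin (α / 2)` it becomes `∫ log (1 - s²) / (2 s²) ds` for
`α ≤ π / 2` and `∫ log s / s² ds` for `α ≥ π / 2`, both with explicit primitives.
The sign also makes the integrability at the singularity `α = 0` automatic, once the
primitive is known to be continuous there.
-/

open Real MeasureTheory Set

theorem Function.Periodic.intervalIntegral_comp_natCast_mul {E : Type*} [NormedAddCommGroup E]
    [NormedSpace ℝ E] {f : ℝ → E} {T : ℝ} (hf : Function.Periodic f T)
    (h_int : ∀ t₁ t₂, IntervalIntegrable f volume t₁ t₂) {n : ℕ} (hn : n ≠ 0) :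
    ∫ x in 0..T, f (n * x) = ∫ x in 0..T, f x := by
  have hn' : (n : ℝ) ≠ 0 := Nat.cast_ne_zero.mpr hn
  have hperiods := hf.intervalIntegral_add_zsmul_eq n 0 h_int
  rw [intervalIntegral.integral_comp_mul_left f hn', mul_zero]
  simp only [zero_add, natCast_zsmul] at hperiods
  rw [← nsmul_eq_mul, hperiods, ← Nat.cast_smul_eq_nsmul ℝ, smul_smul, inv_mul_cancel₀ hn',
    one_smul]

theorem integrableOn_deriv_of_nonpos {g g' : ℝ → ℝ} {a b : ℝ}
    (hcont : ContinuousOn g (Icc a b))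
    (hderiv : ∀ x ∈ Ioo a b, HasDerivAt g (g' x) x) (hg' : ∀ x ∈ Ioo a b, g' x ≤ 0) :
    IntegrableOn g' (Ioc a b) := by
  simpa using (intervalIntegral.integrableOn_deriv_of_nonneg hcont.neg
    (fun x hx ↦ (hderiv x hx).neg) fun x hx ↦ neg_nonneg.mpr (hg' x hx)).neg

lemma ae_cos_ne_zero : ∀ᵐ α : ℝ, cos α ≠ 0 := by
  have hzeros : {α : ℝ | cos α = 0} ⊆ range fun k : ℤ ↦ (2 * k + 1) * π / 2 :=
    fun α hα ↦ (cos_eq_zero_iff.mp hα).imp fun _ h ↦ h.symm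
  exact ((countable_range _).mono hzeros).ae_notMem volume

lemma hasDerivAt_sin_half (α : ℝ) :
    HasDerivAt (fun x ↦ sin (x / 2)) (cos (α / 2) / 2) α := by
  simpa [div_eq_mul_inv] using ((hasDerivAt_id' α).div_const 2).sin

lemma sin_eq_two_mul_sin_half_mul_cos_half (α : ℝ) :
    sin α = 2 * sin (α / 2) * cos (α / 2) := by
  rw [← sin_two_mul, mul_div_cancel₀ _ two_ne_zero]

lemma cos_eq_one_sub_two_mul_sin_half_sq (α : ℝ) : cos α = 1 - 2 * sin (α / 2) ^ 2 := by
  rw [← cos_two_mul_eq_one_sub, mul_div_cancel₀ _ two_ne_zero]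

lemma abs_sin_half_lt_one {α : ℝ} (h0 : 0 ≤ α) (hπ : α < π) : |sin (α / 2)| < 1 := by
  have hs0 : 0 ≤ sin (α / 2) :=
    sin_nonneg_of_nonneg_of_le_pi (by linarith) (by linarith [pi_pos])
  have hs1 : sin (α / 2) < 1 := by
    rw [← sin_pi_div_two]
    exact sin_lt_sin_of_lt_of_le_pi_div_two (by linarith [pi_pos]) le_rfl (by linarith)
  exact abs_lt.mpr ⟨by linarith, hs1⟩

lemma sin_mul_sin_half_zpow_nonneg {α : ℝ} (h0 : 0 ≤ α) (hπ : α ≤ π) :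
    0 ≤ sin α * sin (α / 2) ^ (-3 : ℤ) :=
  mul_nonneg (sin_nonneg_of_nonneg_of_le_pi h0 hπ)
    (zpow_nonneg (sin_nonneg_of_nonneg_of_le_pi (by linarith) (by linarith [pi_pos])) _)

lemma one_sub_two_mul_cos_add_sq_pos {t : ℝ} (ht : |t| < 1) (θ : ℝ) :
    0 < 1 - 2 * t * cos θ + t ^ 2 := by
  have : t * cos θ ≤ |t| := by
    calc t * cos θ ≤ |t * cos θ| := le_abs_self _
      _ = |t| * |cos θ| := abs_mul _ _
      _ ≤ |t| := mul_le_of_le_one_right (abs_nonneg t) (abs_cos_le_one θ)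
  nlinarith [sq_abs t]

lemma norm_circleMap_sub_ofReal_sq (t θ : ℝ) :
    ‖circleMap 0 1 θ - t‖ ^ 2 = 1 - 2 * t * cos θ + t ^ 2 := by
  rw [Complex.sq_norm, Complex.normSq_apply]
  simp only [circleMap, Complex.ofReal_one, one_mul, zero_add, Complex.sub_re,
    Complex.exp_ofReal_mul_I_re, Complex.ofReal_re, Complex.sub_im, Complex.exp_ofReal_mul_I_im,
    Complex.ofReal_im, sub_zero]
  nlinarith [sin_sq_add_cos_sq θ]

theorem integral_log_one_sub_two_mul_cos_add_sq {t : ℝ} (ht : |t| < 1) :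
    ∫ θ in 0..2 * π, log (1 - 2 * t * cos θ + t ^ 2) = 0 := by
  have hlog : ∀ θ, log (1 - 2 * t * cos θ + t ^ 2) = 2 * log ‖circleMap 0 1 θ - t‖ := by
    intro θ
    rw [← norm_circleMap_sub_ofReal_sq, log_pow, Nat.cast_ofNat]
  have hmean : circleAverage (log ‖· - (t : ℂ)‖) 0 1 = 0 :=
    circleAverage_log_norm_sub_const₀ (by rwa [Complex.norm_real, Real.norm_eq_abs])
  rw [circleAverage_def, smul_eq_mul, mul_eq_zero] at hmean
  simp_rw [hlog, intervalIntegral.integral_const_mul]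
  simp [hmean.resolve_left (by positivity)]

theorem integral_log_cos_sq_add_sq_mul_sin_sq {c : ℝ} (hc : 0 < c) :
    ∫ β in 0..2 * π, log (cos β ^ 2 + c ^ 2 * sin β ^ 2) = 4 * π * log ((1 + c) / 2) := by
  set t := (c - 1) / (c + 1)
  have ht : |t| < 1 := by
    rw [abs_div, abs_of_pos (by linarith : 0 < c + 1), div_lt_one (by linarith), abs_lt]
    constructor <;> linarith
  set g : ℝ → ℝ := fun θ ↦ log (1 - 2 * t * cos θ + t ^ 2)
  have hg_cont : Continuous g :=
    Continuous.log (by fun_prop) fun θ ↦ (one_sub_two_mul_cos_add_sq_pos ht θ).ne'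
  have hsplit : ∀ β,
      log (cos β ^ 2 + c ^ 2 * sin β ^ 2) = 2 * log ((1 + c) / 2) + g (2 * β) := by
    intro β
    have hfactor : cos β ^ 2 + c ^ 2 * sin β ^ 2
        = ((1 + c) / 2) ^ 2 * (1 - 2 * t * cos (2 * β) + t ^ 2) := by
      have hc1 : c + 1 ≠ 0 := by linarith
      simp only [t, cos_two_mul, sin_sq]
      field_simp
      ring
    rw [hfactor, log_mul (by positivity) (one_sub_two_mul_cos_add_sq_pos ht _).ne', log_pow,
      Nat.cast_ofNat]
  have hdouble : ∫ β in 0..2 * π, g (2 * β) = 0 := by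
    have hg_periodic : Function.Periodic g (2 * π) := fun θ ↦ by simp [g]
    have hcomp := hg_periodic.intervalIntegral_comp_natCast_mul
      (fun _ _ ↦ hg_cont.intervalIntegrable _ _) (two_ne_zero (α := ℕ))
    rw [Nat.cast_ofNat] at hcomp
    rw [hcomp]
    exact integral_log_one_sub_two_mul_cos_add_sq ht
  have hint : IntervalIntegrable (fun β ↦ g (2 * β)) volume 0 (2 * π) :=
    (hg_cont.comp (continuous_const_mul 2)).intervalIntegrable _ _
  simp_rw [hsplit]
  rw [intervalIntegral.integral_add intervalIntegrable_const hint, hdouble]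
  simp only [intervalIntegral.integral_const, sub_zero, smul_eq_mul, add_zero]
  ring

noncomputable def primitiveLow (s : ℝ) : ℝ :=
  -(log (1 - s ^ 2) / s + log (1 + s) - log (1 - s)) / 2

noncomputable def primitiveHigh (s : ℝ) : ℝ := -(log s + 1) / s

lemma hasDerivAt_primitiveLow {s : ℝ} (hs0 : s ≠ 0) (hs : |s| < 1) :
    HasDerivAt primitiveLow (log (1 - s ^ 2) / (2 * s ^ 2)) s := by
  obtain ⟨hs1, hs2⟩ := abs_lt.mp hs
  have h1 : 0 < 1 - s ^ 2 := by nlinarith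
  have h2 : 0 < 1 + s := by linarith
  have h3 : 0 < 1 - s := by linarith
  have hd := ((((((hasDerivAt_pow 2 s).const_sub 1).log h1.ne').div (hasDerivAt_id' s) hs0)
    |>.add (((hasDerivAt_id' s).const_add 1).log h2.ne')
    |>.sub (((hasDerivAt_id' s).const_sub 1).log h3.ne')).neg.div_const 2)
  refine hd.congr_deriv ?_
  field_simp
  ring

lemma hasDerivAt_primitiveHigh {s : ℝ} (hs : s ≠ 0) :
    HasDerivAt primitiveHigh (log s / s ^ 2) s := by
  have hd := (((hasDerivAt_id' s).log hs).add_const 1).neg.div (hasDerivAt_id' s) hs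
  refine hd.congr_deriv ?_
  simp only [Pi.neg_apply]
  field_simp
  ring

lemma continuousAt_primitiveLow_zero : ContinuousAt primitiveLow 0 := by
  have hslope : HasDerivAt (fun s ↦ log (1 - s ^ 2)) 0 0 := by
    simpa using (((hasDerivAt_id (0 : ℝ)).pow 2).const_sub 1).log (by norm_num)
  have hquot : ContinuousAt (fun s ↦ log (1 - s ^ 2) / s) 0 := by
    rw [continuousAt_iff_punctured_nhds, zero_pow two_ne_zero, sub_zero, log_one, div_zero]
    refine (hasDerivAt_iff_tendsto_slope.mp hslope).congr fun s ↦ ?_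
    simp [slope_def_field]
  unfold primitiveLow
  have h1 : ContinuousAt (fun s : ℝ ↦ log (1 + s)) 0 := by fun_prop (disch := norm_num)
  have h2 : ContinuousAt (fun s : ℝ ↦ log (1 - s)) 0 := by fun_prop (disch := norm_num)
  exact ((hquot.add h1).sub h2).neg.div_const 2

lemma continuousAt_primitiveLow {s : ℝ} (hs : |s| < 1) : ContinuousAt primitiveLow s := by
  rcases eq_or_ne s 0 with rfl | hs0
  · exact continuousAt_primitiveLow_zero
  · exact (hasDerivAt_primitiveLow hs0 hs).continuousAt

lemma primitiveLow_sqrt_two_div_two :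
    primitiveLow (√2 / 2) = √2 / 2 * log 2 - log (1 + √2) := by
  have hsq : √2 ^ 2 = 2 := sq_sqrt zero_le_two
  have hpos : 0 < √2 := by positivity
  have hlt : √2 < 2 := by nlinarith
  have h1 : 1 - (√2 / 2) ^ 2 = 2⁻¹ := by rw [div_pow, hsq]; norm_num
  have h2 : (1 + √2 / 2) / (1 - √2 / 2) = (1 + √2) ^ 2 := by
    rw [div_eq_iff (by linarith)]; linear_combination (√2 / 2) * hsq
  have h3 : log (1 + √2 / 2) - log (1 - √2 / 2) = 2 * log (1 + √2) := by
    rw [← log_div (by positivity) (by linarith), h2, log_pow, Nat.cast_ofNat]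
  rw [primitiveLow, h1, log_inv, add_sub_assoc, h3]
  field_simp
  linear_combination (-log 2) * hsq

lemma primitiveHigh_sqrt_two_div_two : primitiveHigh (√2 / 2) = √2 / 2 * log 2 - √2 := by
  have hsq : √2 ^ 2 = 2 := sq_sqrt zero_le_two
  have hlog : log (√2 / 2) = -log 2 / 2 := by
    rw [log_div (by positivity) two_ne_zero, log_sqrt zero_le_two]; ring
  rw [primitiveHigh, hlog]
  field_simp
  linear_combination (2 - log 2) * hsq

noncomputable def reducedIntegrand (α : ℝ) : ℝ :=
  sin α * sin (α / 2) ^ (-3 : ℤ) * log ((1 + |cos α|) / 2) / 8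

lemma reducedIntegrand_eq_of_cos_nonneg {α : ℝ} (hα : 0 ≤ cos α) :
    reducedIntegrand α
      = log (1 - sin (α / 2) ^ 2) / (2 * sin (α / 2) ^ 2) * (cos (α / 2) / 2) := by
  have hhalf : (1 + cos α) / 2 = 1 - sin (α / 2) ^ 2 := by
    rw [cos_eq_one_sub_two_mul_sin_half_sq α]; ring
  rw [reducedIntegrand, abs_of_nonneg hα, hhalf, sin_eq_two_mul_sin_half_mul_cos_half]
  rcases eq_or_ne (sin (α / 2)) 0 with h | h
  · simp [h]
  · rw [zpow_neg]
    field_simp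
    ring

lemma reducedIntegrand_eq_of_cos_nonpos {α : ℝ} (hα : cos α ≤ 0) :
    reducedIntegrand α = log (sin (α / 2)) / sin (α / 2) ^ 2 * (cos (α / 2) / 2) := by
  have hhalf : (1 + -cos α) / 2 = sin (α / 2) ^ 2 := by
    rw [cos_eq_one_sub_two_mul_sin_half_sq α]; ring
  rw [reducedIntegrand, abs_of_nonpos hα, hhalf, log_pow, sin_eq_two_mul_sin_half_mul_cos_half]
  rcases eq_or_ne (sin (α / 2)) 0 with h | h
  · simp [h]
  · rw [zpow_neg]
    field_simp
    ring

lemma reducedIntegrand_nonpos {α : ℝ} (h0 : 0 ≤ α) (hπ : α ≤ π) :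
    reducedIntegrand α ≤ 0 := by
  have hlog : log ((1 + |cos α|) / 2) ≤ 0 :=
    log_nonpos (by positivity) (by linarith [abs_cos_le_one α])
  exact div_nonpos_of_nonpos_of_nonneg
    (mul_nonpos_of_nonneg_of_nonpos (sin_mul_sin_half_zpow_nonneg h0 hπ) hlog) (by norm_num)

lemma hasDerivAt_primitiveLow_sin_half {α : ℝ} (h0 : 0 < α) (hα : α ≤ π / 2) :
    HasDerivAt (fun x ↦ primitiveLow (sin (x / 2))) (reducedIntegrand α) α := by
  have hs0 : 0 < sin (α / 2) := sin_pos_of_pos_of_lt_pi (by linarith) (by linarith [pi_pos])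
  rw [reducedIntegrand_eq_of_cos_nonneg (cos_nonneg_of_mem_Icc ⟨by linarith, hα⟩)]
  exact (hasDerivAt_primitiveLow hs0.ne' (abs_sin_half_lt_one h0.le (by linarith [pi_pos]))).comp
    α (hasDerivAt_sin_half α)

lemma hasDerivAt_primitiveHigh_sin_half {α : ℝ} (hα : π / 2 ≤ α) (h1 : α ≤ π) :
    HasDerivAt (fun x ↦ primitiveHigh (sin (x / 2))) (reducedIntegrand α) α := by
  have hs0 : 0 < sin (α / 2) :=
    sin_pos_of_pos_of_lt_pi (by linarith [pi_pos]) (by linarith [pi_pos])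
  rw [reducedIntegrand_eq_of_cos_nonpos (cos_nonpos_of_pi_div_two_le_of_le hα (by linarith))]
  exact (hasDerivAt_primitiveHigh hs0.ne').comp α (hasDerivAt_sin_half α)

lemma continuousOn_primitiveLow_sin_half :
    ContinuousOn (fun x ↦ primitiveLow (sin (x / 2))) (Icc 0 (π / 2)) := fun α hα ↦
  ((continuousAt_primitiveLow (abs_sin_half_lt_one hα.1 (by linarith [hα.2, pi_pos]))).comp
    (f := fun x ↦ sin (x / 2)) (by fun_prop)).continuousWithinAt

lemma continuousOn_primitiveHigh_sin_half :
    ContinuousOn (fun x ↦ primitiveHigh (sin (x / 2))) (Icc (π / 2) π) :=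
  fun _ hα ↦ (hasDerivAt_primitiveHigh_sin_half hα.1 hα.2).continuousAt.continuousWithinAt

lemma integrableOn_reducedIntegrand_Ioc_zero_pi_div_two :
    IntegrableOn reducedIntegrand (Ioc 0 (π / 2)) :=
  integrableOn_deriv_of_nonpos continuousOn_primitiveLow_sin_half
    (fun _ hα ↦ hasDerivAt_primitiveLow_sin_half hα.1 hα.2.le)
    fun _ hα ↦ reducedIntegrand_nonpos hα.1.le (by linarith [hα.2, pi_pos])

lemma integrableOn_reducedIntegrand_Ioc_pi_div_two_pi :
    IntegrableOn reducedIntegrand (Ioc (π / 2) π) :=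
  integrableOn_deriv_of_nonpos continuousOn_primitiveHigh_sin_half
    (fun _ hα ↦ hasDerivAt_primitiveHigh_sin_half hα.1.le hα.2.le)
    fun _ hα ↦ reducedIntegrand_nonpos (by linarith [hα.1, pi_pos]) hα.2.le

lemma integrableOn_reducedIntegrand : IntegrableOn reducedIntegrand (Ioc 0 π) := by
  rw [← Ioc_union_Ioc_eq_Ioc (b := π / 2) (by linarith [pi_pos]) (by linarith [pi_pos])]
  exact integrableOn_reducedIntegrand_Ioc_zero_pi_div_two.union
    integrableOn_reducedIntegrand_Ioc_pi_div_two_pi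

theorem integral_reducedIntegrand :
    ∫ α in 0..π, reducedIntegrand α = √2 - 1 - log (1 + √2) := by
  have hπ := pi_pos
  have hlow : IntervalIntegrable reducedIntegrand volume 0 (π / 2) :=
    (intervalIntegrable_iff_integrableOn_Ioc_of_le (by linarith)).mpr
      integrableOn_reducedIntegrand_Ioc_zero_pi_div_two
  have hhigh : IntervalIntegrable reducedIntegrand volume (π / 2) π :=
    (intervalIntegrable_iff_integrableOn_Ioc_of_le (by linarith)).mpr
      integrableOn_reducedIntegrand_Ioc_pi_div_two_pi
  rw [← intervalIntegral.integral_add_adjacent_intervals hlow hhigh,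
    intervalIntegral.integral_eq_sub_of_hasDerivAt_of_le (by linarith)
      continuousOn_primitiveLow_sin_half
      (fun _ hα ↦ hasDerivAt_primitiveLow_sin_half hα.1 hα.2.le) hlow,
    intervalIntegral.integral_eq_sub_of_hasDerivAt_of_le (by linarith)
      continuousOn_primitiveHigh_sin_half
      (fun _ hα ↦ hasDerivAt_primitiveHigh_sin_half hα.1.le hα.2.le) hhigh,
    show π / 2 / 2 = π / 4 by ring, sin_pi_div_four, primitiveLow_sqrt_two_div_two,
    primitiveHigh_sqrt_two_div_two, sin_pi_div_two, zero_div, sin_zero]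
  simp only [primitiveLow, primitiveHigh, log_one, div_zero, div_one, add_zero, sub_zero]
  ring

noncomputable def excursionIntegrand (β α : ℝ) : ℝ :=
  (1 / (16 * π)) * sin α * sin (α / 2) ^ (-3 : ℤ) *
    log (√(cos β ^ 2 + sin β ^ 2 * cos α ^ 2))

lemma cos_sq_le_cos_sq_add_sin_sq_mul_cos_sq (β α : ℝ) :
    cos α ^ 2 ≤ cos β ^ 2 + sin β ^ 2 * cos α ^ 2 := by
  nlinarith [sin_sq_add_cos_sq β, cos_sq_le_one α, sq_nonneg (cos β)]

lemma cos_sq_add_sin_sq_mul_cos_sq_le_one (β α : ℝ) :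
    cos β ^ 2 + sin β ^ 2 * cos α ^ 2 ≤ 1 := by
  nlinarith [sin_sq_add_cos_sq β, cos_sq_le_one α, sq_nonneg (sin β)]

lemma excursionIntegrand_nonpos {α : ℝ} (h0 : 0 ≤ α) (hπ : α ≤ π) (β : ℝ) :
    excursionIntegrand β α ≤ 0 := by
  have hlog : log (√(cos β ^ 2 + sin β ^ 2 * cos α ^ 2)) ≤ 0 :=
    log_nonpos (sqrt_nonneg _) (sqrt_le_one.mpr (cos_sq_add_sin_sq_mul_cos_sq_le_one β α))
  have hfactor : 0 ≤ 1 / (16 * π) * sin α * sin (α / 2) ^ (-3 : ℤ) := by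
    rw [mul_assoc]
    exact mul_nonneg (by positivity) (sin_mul_sin_half_zpow_nonneg h0 hπ)
  exact mul_nonpos_of_nonneg_of_nonpos hfactor hlog

lemma continuous_excursionIntegrand {α : ℝ} (hα : cos α ≠ 0) :
    Continuous fun β ↦ excursionIntegrand β α := by
  refine continuous_const.mul (Continuous.log (by fun_prop) fun β ↦ ?_)
  exact (sqrt_pos.mpr ((pow_two_pos_of_ne_zero hα).trans_le
    (cos_sq_le_cos_sq_add_sin_sq_mul_cos_sq β α))).ne'

lemma measurable_excursionIntegrand : Measurable (Function.uncurry excursionIntegrand) := by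
  unfold Function.uncurry excursionIntegrand
  fun_prop

theorem integral_excursionIntegrand {α : ℝ} (hα : cos α ≠ 0) :
    ∫ β in 0..2 * π, excursionIntegrand β α = reducedIntegrand α := by
  have hβ : ∀ β, excursionIntegrand β α
      = 1 / (16 * π) * sin α * sin (α / 2) ^ (-3 : ℤ) / 2
        * log (cos β ^ 2 + |cos α| ^ 2 * sin β ^ 2) := by
    intro β
    rw [excursionIntegrand, log_sqrt (by positivity), sq_abs, mul_comm (sin β ^ 2)]
    ring
  simp_rw [hβ]
  rw [intervalIntegral.integral_const_mul,
    integral_log_cos_sq_add_sq_mul_sin_sq (abs_pos.mpr hα), reducedIntegrand]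
  field_simp
  ring

lemma integrable_excursionIntegrand : Integrable (Function.uncurry excursionIntegrand)
    ((volume.restrict (Ioc 0 (2 * π))).prod (volume.restrict (Ioc 0 π))) := by
  rw [integrable_prod_iff' measurable_excursionIntegrand.aestronglyMeasurable]
  refine ⟨?_, ?_⟩
  · filter_upwards [ae_restrict_of_ae ae_cos_ne_zero] with α hα
    exact (continuous_excursionIntegrand hα).integrableOn_Ioc
  · refine integrableOn_reducedIntegrand.neg.congr ?_
    filter_upwards [ae_restrict_mem measurableSet_Ioc, ae_restrict_of_ae ae_cos_ne_zero]
      with α hαmem hα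
    have hnorm : ∀ β, ‖excursionIntegrand β α‖ = -excursionIntegrand β α := fun β ↦
      norm_of_nonpos (excursionIntegrand_nonpos hαmem.1.le hαmem.2 β)
    rw [Pi.neg_apply, ← integral_excursionIntegrand hα,
      intervalIntegral.integral_of_le two_pi_pos.le, ← integral_neg]
    simp only [Function.uncurry_apply_pair, hnorm]

/-- The Lyapunov excursion integral for the exterior of the unit ball in ℝ³:
∫₀^{2π} ∫₀^π (1/(16π)) sin α (sin(α/2))^{-3} log√(cos²β + sin²β cos²α) dα dβ
  = √2 − 1 − log(1 + √2). -/
theorem stmt_0 :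
    (∫ β in (0:ℝ)..(2*π), ∫ α in (0:ℝ)..π,
      (1/(16*π)) * Real.sin α * (Real.sin (α/2)) ^ (-3 : ℤ) *
        Real.log (Real.sqrt (Real.cos β ^ 2 + Real.sin β ^ 2 * Real.cos α ^ 2)))
    = Real.sqrt 2 - 1 - Real.log (1 + Real.sqrt 2) := by
  change ∫ β in 0..2 * π, ∫ α in 0..π, excursionIntegrand β α = _
  simp only [intervalIntegral.integral_of_le two_pi_pos.le,
    intervalIntegral.integral_of_le pi_pos.le]
  rw [integral_integral_swap integrable_excursionIntegrand, ← integral_reducedIntegrand,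
    intervalIntegral.integral_of_le pi_pos.le]
  refine integral_congr_ae ?_
  filter_upwards [ae_restrict_of_ae ae_cos_ne_zero] with α hα
  rw [← intervalIntegral.integral_of_le two_pi_pos.le, integral_excursionIntegrand hα]
end

section
/- For every u ∈ (0, 1), the integral ∫₀^{π/2} log(cos²β + u² sin²β) dβ equals π · log((1 + u)/2). -/
open Real

noncomputable def gg (r θ : ℝ) : ℝ := Real.log (1 - 2*r*Real.cos θ + r^2)

lemma gg_arg_pos {r : ℝ} (h0 : 0 ≤ r) (h1 : r < 1) (θ : ℝ) :
    0 < 1 - 2*r*Real.cos θ + r^2 := by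
  nlinarith [Real.cos_le_one θ, Real.neg_one_le_cos θ, sq_nonneg (1 - r)]

lemma gg_cont {r : ℝ} (h0 : 0 ≤ r) (h1 : r < 1) : Continuous (gg r) := by
  apply Continuous.log
  · continuity
  · exact fun θ => (gg_arg_pos h0 h1 θ).ne'

lemma gg_bound {r s : ℝ} (h0 : 0 ≤ s) (hsr : s ≤ r) (h1 : r < 1) (θ : ℝ) :
    |gg s θ| ≤ 2*|Real.log (1-r)| + 2*Real.log 2 := by
  have hs1 : s < 1 := lt_of_le_of_lt hsr h1
  have hxpos : 0 < 1 - 2*s*Real.cos θ + s^2 := gg_arg_pos h0 hs1 θ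
  have hlo : (1-r)^2 ≤ 1 - 2*s*Real.cos θ + s^2 := by
    nlinarith [Real.cos_le_one θ, sq_nonneg (1-s), sq_nonneg (r-s)]
  have hhi : 1 - 2*s*Real.cos θ + s^2 ≤ 4 := by
    nlinarith [Real.neg_one_le_cos θ]
  have h2 : Real.log (1 - 2*s*Real.cos θ + s^2) ≤ Real.log 4 :=
    Real.log_le_log hxpos hhi
  have h3 : Real.log ((1-r)^2) ≤ Real.log (1 - 2*s*Real.cos θ + s^2) :=
    Real.log_le_log (pow_pos (by linarith) 2) hlo
  have h4 : Real.log 4 = 2 * Real.log 2 := by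
    rw [show (4:ℝ) = 2^2 by norm_num, Real.log_pow]; push_cast; ring
  have h5 : Real.log ((1-r)^2) = 2 * Real.log (1-r) := by
    rw [Real.log_pow]; push_cast; ring
  have h6 : -|Real.log (1-r)| ≤ Real.log (1-r) := neg_abs_le _
  have h7 : (0:ℝ) ≤ Real.log 2 := Real.log_nonneg (by norm_num)
  have h8 : (0:ℝ) ≤ |Real.log (1-r)| := abs_nonneg _
  rw [abs_le]
  constructor
  · unfold gg; rw [h5] at h3; linarith
  · unfold gg; rw [h4] at h2; linarith

noncomputable def JJ (r : ℝ) : ℝ := ∫ θ in (0:ℝ)..π, gg r θ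

lemma JJ_dup {r : ℝ} (h0 : 0 ≤ r) (h1 : r < 1) : JJ (r^2) = 2 * JJ r := by
  have h0' : 0 ≤ r^2 := sq_nonneg r
  have h1' : r^2 < 1 := by nlinarith
  have key : ∀ θ : ℝ, gg (r^2) (2*θ) = gg r θ + gg r (π - θ) := by
    intro θ
    have e1 : 1 - 2*r*Real.cos (π-θ) + r^2 = 1 + 2*r*Real.cos θ + r^2 := by
      rw [Real.cos_pi_sub]; ring
    have hp1 : 0 < 1 - 2*r*Real.cos θ + r^2 := gg_arg_pos h0 h1 θ
    have hp2 : 0 < 1 + 2*r*Real.cos θ + r^2 := by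
      have := gg_arg_pos h0 h1 (π - θ); rwa [e1] at this
    unfold gg
    rw [e1, ← Real.log_mul hp1.ne' hp2.ne']
    congr 1
    rw [Real.cos_two_mul]; ring
  have ig : ∀ a b : ℝ, IntervalIntegrable (gg r) MeasureTheory.volume a b :=
    fun a b => (gg_cont h0 h1).intervalIntegrable a b
  have step1 : JJ (r^2) = 2 * ∫ θ in (0:ℝ)..(π/2), gg (r^2) (2*θ) := by
    rw [intervalIntegral.integral_comp_mul_left (gg (r^2)) (two_ne_zero)]
    simp only [smul_eq_mul]
    rw [show (2:ℝ) * 0 = 0 by ring, show (2:ℝ) * (π/2) = π by ring]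
    unfold JJ; ring
  have step2 : (∫ θ in (0:ℝ)..(π/2), gg (r^2) (2*θ))
      = (∫ θ in (0:ℝ)..(π/2), gg r θ) + ∫ θ in (0:ℝ)..(π/2), gg r (π - θ) := by
    have hc : Continuous fun θ : ℝ => gg r (π - θ) :=
      (gg_cont h0 h1).comp (by continuity)
    rw [intervalIntegral.integral_congr (g := fun θ => gg r θ + gg r (π - θ))
      (fun θ _ => key θ)]
    exact intervalIntegral.integral_add (ig 0 (π/2)) (hc.intervalIntegrable 0 (π/2))
  have step3 : (∫ θ in (0:ℝ)..(π/2), gg r (π - θ)) = ∫ x in (π/2)..π, gg r x := by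
    have := intervalIntegral.integral_comp_sub_left (a := 0) (b := π/2) (gg r) π
    rw [this, show π - π/2 = π/2 by ring, sub_zero]
  have step4 : (∫ θ in (0:ℝ)..(π/2), gg r θ) + (∫ x in (π/2)..π, gg r x) = JJ r :=
    intervalIntegral.integral_add_adjacent_intervals (ig 0 (π/2)) (ig (π/2) π)
  rw [step1, step2, step3, step4]

lemma JJ_zero {r : ℝ} (h0 : 0 ≤ r) (h1 : r < 1) : JJ r = 0 := by
  set C : ℝ := 2*|Real.log (1-r)| + 2*Real.log 2 with hC
  have iter : ∀ n : ℕ, (2:ℝ)^n * JJ r = JJ (r^(2^n)) := by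
    intro n
    induction n with
    | zero => simp
    | succ n ih =>
      have e : r^(2^(n+1)) = (r^(2^n))^2 := by
        rw [← pow_mul, pow_succ]
      have hp0 : 0 ≤ r^(2^n) := pow_nonneg h0 _
      have hp1 : r^(2^n) < 1 := pow_lt_one₀ h0 h1 (by positivity)
      rw [e, JJ_dup hp0 hp1, ← ih, pow_succ]; ring
  have bound : ∀ n : ℕ, |JJ (r^(2^n))| ≤ C * π := by
    intro n
    have hs0 : 0 ≤ r^(2^n) := pow_nonneg h0 _
    have hsr : r^(2^n) ≤ r := by
      rcases eq_or_lt_of_le h0 with h | h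
      · simp [← h]
      · exact pow_le_of_le_one h0 h1.le (by positivity)
    have := intervalIntegral.norm_integral_le_of_norm_le_const
      (a := 0) (b := π) (C := C) (f := gg (r^(2^n)))
      (fun x _ => gg_bound hs0 hsr h1 x)
    rw [sub_zero, abs_of_nonneg Real.pi_pos.le] at this
    exact this
  have hb : ∀ n : ℕ, |JJ r| ≤ C * π / 2^n := by
    intro n
    have h2n : (0:ℝ) < 2^n := by positivity
    rw [le_div_iff₀ h2n]
    calc |JJ r| * 2^n = |(2:ℝ)^n * JJ r| := by
          rw [abs_mul, abs_of_nonneg h2n.le]; ring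
      _ = |JJ (r^(2^n))| := by rw [iter n]
      _ ≤ C * π := bound n
  have htend : Filter.Tendsto (fun n : ℕ => C * π / 2^n) Filter.atTop (nhds 0) := by
    have : (fun n : ℕ => C * π / 2^n) = fun n : ℕ => (C*π) * (1/2:ℝ)^n := by
      funext n; rw [div_pow, one_pow]; ring
    rw [this]
    simpa using (tendsto_pow_atTop_nhds_zero_of_lt_one (by norm_num) (by norm_num : (1/2:ℝ) < 1)).const_mul (C*π)
  have : |JJ r| ≤ 0 := ge_of_tendsto htend (Filter.Eventually.of_forall hb)
  exact abs_eq_zero.mp (le_antisymm this (abs_nonneg _))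

/-- For u ∈ (0,1), ∫₀^{π/2} log(cos²β + u² sin²β) dβ = π log((1+u)/2). -/
theorem stmt_2 :
    ∀ u : ℝ, u ∈ Set.Ioo (0:ℝ) 1 →
      (∫ β in (0:ℝ)..(π/2),
        Real.log (Real.cos β ^ 2 + u ^ 2 * Real.sin β ^ 2))
      = π * Real.log ((1 + u) / 2) := by
  rintro u ⟨hu0, hu1⟩
  set r : ℝ := (1-u)/(1+u) with hr
  have h1u : (0:ℝ) < 1 + u := by linarith
  have hr0 : 0 ≤ r := by
    apply div_nonneg <;> linarith
  have hr1 : r < 1 := by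
    rw [div_lt_one h1u]; linarith
  have key : ∀ β : ℝ, Real.log (Real.cos β ^ 2 + u ^ 2 * Real.sin β ^ 2)
      = 2 * Real.log ((1+u)/2) + gg r (π - 2*β) := by
    intro β
    have e1 : 1 - 2*r*Real.cos (π - 2*β) + r^2 = 1 + 2*r*Real.cos (2*β) + r^2 := by
      rw [Real.cos_pi_sub]; ring
    have hp : 0 < 1 + 2*r*Real.cos (2*β) + r^2 := by
      have := gg_arg_pos hr0 hr1 (π - 2*β); rwa [e1] at this
    have halg : Real.cos β ^ 2 + u ^ 2 * Real.sin β ^ 2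
        = ((1+u)/2)^2 * (1 + 2*r*Real.cos (2*β) + r^2) := by
      rw [Real.cos_two_mul, Real.sin_sq, hr]
      field_simp
      ring
    rw [halg, Real.log_mul (by positivity) hp.ne', Real.log_pow]
    unfold gg
    rw [e1]
    push_cast; ring
  rw [intervalIntegral.integral_congr (g := fun β => 2 * Real.log ((1+u)/2) + gg r (π - 2*β))
    (fun β _ => key β)]
  have hcont : Continuous (fun β : ℝ => gg r (π - 2*β)) :=
    (gg_cont hr0 hr1).comp (by continuity)
  rw [intervalIntegral.integral_add (intervalIntegrable_const)
    (hcont.intervalIntegrable 0 (π/2))]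
  have hz : (∫ β in (0:ℝ)..(π/2), gg r (π - 2*β)) = 0 := by
    have e2 : (fun β : ℝ => gg r (π - 2*β)) = fun β : ℝ => (fun y => gg r (π - y)) (2*β) := by
      funext β; rfl
    rw [e2, intervalIntegral.integral_comp_mul_left (fun y => gg r (π - y)) (two_ne_zero)]
    rw [show (2:ℝ) * 0 = 0 by ring, show (2:ℝ) * (π/2) = π by ring]
    rw [intervalIntegral.integral_comp_sub_left (gg r) π, sub_self, sub_zero]
    have := JJ_zero hr0 hr1
    unfold JJ at this
    rw [this, smul_zero]
  rw [hz, intervalIntegral.integral_const, add_zero, smul_eq_mul, sub_zero]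
  ring
end
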